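/- arXiv:2512.00153 — 2 statements merged into one kernel-verified Lean document; each statement's English description precedes it below -/
import Mathlib

section
/- Assume every vertex of G lies on some directed path from s to t. A set C of edges of G is an (s,t)-min-cut of G if and only if every edge of C is critical and C, regarded as a set of edges of the strip graph D_λ, is an antichain that is maximal among the antichains of D_λ consisting of critical edges. -/
open Finset

/-- A finite directed multigraph on vertex type `V` with edge type `E`:
each edge `e` has a source `src e` and a target `tgt e`. -/
structure Digraph' (V E : Type) where
  src : E → V
  tgt : E → V

namespace Digraph'

variable {V E : Type} [Fintype V] [DecidableEq V] [Fintype E] [DecidableEq E]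

/-- `h : E → ℕ` satisfies flow conservation at every vertex other than `s` and `t`:
the sum over incoming edges equals the sum over outgoing edges. -/
def Conserves (G : Digraph' V E) (s t : V) (h : E → ℕ) : Prop :=
  ∀ v : V, v ≠ s → v ≠ t →
    ∑ e ∈ univ.filter (fun e => G.tgt e = v), h e =
      ∑ e ∈ univ.filter (fun e => G.src e = v), h e

/-- The value of `h`: the net flow out of `s`. -/
def flowValue (G : Digraph' V E) (s : V) (h : E → ℕ) : ℤ :=
  (∑ e ∈ univ.filter (fun e => G.src e = s), (h e : ℤ)) -
    ∑ e ∈ univ.filter (fun e => G.tgt e = s), (h e : ℤ)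

/-- An `(s,t)`-flow of a unit-capacity digraph: a `{0,1}`-valued function on edges
satisfying flow conservation at every vertex other than `s` and `t`. -/
def IsFlow (G : Digraph' V E) (s t : V) (f : E → ℕ) : Prop :=
  (∀ e, f e ≤ 1) ∧ G.Conserves s t f

/-- One step along an edge not belonging to `F`. -/
def stepAvoid (G : Digraph' V E) (F : Finset E) (u v : V) : Prop :=
  ∃ e, e ∉ F ∧ G.src e = u ∧ G.tgt e = v

/-- Reachability by a directed path using no edge of `F`. -/
def ReachAvoid (G : Digraph' V E) (F : Finset E) : V → V → Prop :=
  Relation.ReflTransGen (G.stepAvoid F)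

/-- `C` is an `(s,t)`-cut: after deleting the edges of `C` there is no directed
path from `s` to `t`. -/
def IsCut (G : Digraph' V E) (s t : V) (C : Finset E) : Prop :=
  ¬ G.ReachAvoid C s t

/-- An `(s,t)`-min-cut: an `(s,t)`-cut of minimum cardinality. -/
def IsMinCut (G : Digraph' V E) (s t : V) (C : Finset E) : Prop :=
  G.IsCut s t C ∧ ∀ C' : Finset E, G.IsCut s t C' → C.card ≤ C'.card

/-- A minimal `(s,t)`-cut: no proper subset of it is an `(s,t)`-cut. -/
def IsMinimalCut (G : Digraph' V E) (s t : V) (C : Finset E) : Prop :=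
  G.IsCut s t C ∧ ∀ C' : Finset E, C' ⊂ C → ¬ G.IsCut s t C'

/-- An edge is critical if it belongs to some `(s,t)`-min-cut. -/
def Critical (G : Digraph' V E) (s t : V) (e : E) : Prop :=
  ∃ C : Finset E, G.IsMinCut s t C ∧ e ∈ C

/-- `m` is the maximum `(s,t)`-flow value of `G − F`, i.e. the largest value of an
`(s,t)`-flow of `G` vanishing on every edge of `F`. -/
def IsMaxFlowValue (G : Digraph' V E) (s t : V) (F : Finset E) (m : ℤ) : Prop :=
  (∃ f, G.IsFlow s t f ∧ (∀ e ∈ F, f e = 0) ∧ G.flowValue s f = m) ∧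
    ∀ f, G.IsFlow s t f → (∀ e ∈ F, f e = 0) → G.flowValue s f ≤ m

/-- The residual graph `G_f` of a `{0,1}`-flow `f`: each edge with `f e = 1`
is reversed, each edge with `f e = 0` is kept as is. -/
def residual (G : Digraph' V E) (f : E → ℕ) : Digraph' V E where
  src e := if f e = 1 then G.tgt e else G.src e
  tgt e := if f e = 1 then G.src e else G.tgt e

end Digraph'

namespace Digraph'

variable {V E : Type} [Fintype V] [DecidableEq V] [Fintype E] [DecidableEq E]

/-- An `(s,t)`-min-cut partition: `(A, Aᶜ)` with `s ∈ A`, `t ∉ A`, and exactly `λ`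
edges of `G` directed from `A` to `Aᶜ`. -/
def IsMinCutPartition (G : Digraph' V E) (s t : V) (lam : ℕ) (A : Finset V) : Prop :=
  s ∈ A ∧ t ∉ A ∧ (univ.filter (fun e => G.src e ∈ A ∧ G.tgt e ∉ A)).card = lam

/-- Two vertices are equivalent if every `(s,t)`-min-cut partition has them on the
same side. -/
def VEquiv (G : Digraph' V E) (s t : V) (lam : ℕ) (x y : V) : Prop :=
  ∀ A : Finset V, G.IsMinCutPartition s t lam A → (x ∈ A ↔ y ∈ A)

/-- An inter-cluster edge: its endpoints are separated by some min-cut partition. -/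
def InterCluster (G : Digraph' V E) (s t : V) (lam : ℕ) (e : E) : Prop :=
  ¬ G.VEquiv s t lam (G.src e) (G.tgt e)

/-- `u` and `v` are the tail and head of edge `e` in the strip graph `D_λ`:
critical edges keep their orientation, non-critical edges are reversed. -/
def DEnds (G : Digraph' V E) (s t : V) (e : E) (u v : V) : Prop :=
  (G.Critical s t e ∧ u = G.src e ∧ v = G.tgt e) ∨
    (¬ G.Critical s t e ∧ u = G.tgt e ∧ v = G.src e)

/-- One step in the strip graph `D_λ` (on representatives): either stay within an
equivalence class, or traverse an inter-cluster edge in its `D_λ`-orientation. -/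
def DStep (G : Digraph' V E) (s t : V) (lam : ℕ) (u v : V) : Prop :=
  G.VEquiv s t lam u v ∨
    ∃ e : E, G.InterCluster s t lam e ∧ G.DEnds s t e u v

/-- Reachability in the strip graph `D_λ` (between classes, via representatives). -/
def DReach (G : Digraph' V E) (s t : V) (lam : ℕ) : V → V → Prop :=
  Relation.ReflTransGen (G.DStep s t lam)

/-- The partial order on edges of `D_λ`: `e ≤ e'` iff `e = e'` or some directed
path of `D_λ` from the class of `s` to the class of `t` traverses `e` before `e'`. -/
def EdgeLE (G : Digraph' V E) (s t : V) (lam : ℕ) (e e' : E) : Prop :=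
  e = e' ∨ ∃ u v u' v' : V, G.DEnds s t e u v ∧ G.DEnds s t e' u' v' ∧
    G.DReach s t lam s u ∧ G.DReach s t lam v u' ∧ G.DReach s t lam v' t

/-- A set of edges of `G`, regarded as edges of `D_λ`, is an antichain if its
elements are pairwise incomparable under `EdgeLE`. -/
def EdgeAntichain (G : Digraph' V E) (s t : V) (lam : ℕ) (C : Finset E) : Prop :=
  ∀ e ∈ C, ∀ e' ∈ C, G.EdgeLE s t lam e e' → e = e'

end Digraph'

/-!
Fix a maximum flow `f`. Augmenting paths show that the `(s,t)`-min-cuts are exactly the sets of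
edges leaving min-cut partitions `A`, and that `f` saturates each of them: `f = 1` on the edges
leaving `A` and `f = 0` on the edges entering it. Hence critical edges carry flow, an edge with
flow is a step of `D_λ` in its own direction and an edge without flow a step against it, and the
min-cut partitions are exactly the sets containing `s`, not `t`, and closed under predecessors in
`D_λ`. The comparabilities in `D_λ` that are needed all come from one conservation argument: if
no flow leaves a vertex set avoiding `t` then none enters it, and dually. Applied to sets cut out
by `D_λ`-reachability, it makes every critical edge comparable with some edge of each min-cut
and yields, for a maximal antichain `C` of critical edges, a min-cut partition whose cut is `C`.
-/

namespace Digraph'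

variable {V E : Type} {G : Digraph' V E} {s t u v : V} {lam : ℕ} {f : E → ℕ} {A : Finset V}

def IsWalk (G : Digraph' V E) : List E → V → V → Prop
  | [], u, v => u = v
  | e :: l, u, v => G.src e = u ∧ G.IsWalk l (G.tgt e) v

lemma isWalk_append {l₁ l₂ : List E} :
    G.IsWalk (l₁ ++ l₂) u v ↔ ∃ w, G.IsWalk l₁ u w ∧ G.IsWalk l₂ w v := by
  induction l₁ generalizing u with
  | nil => simp [IsWalk]
  | cons e l ih => simp [IsWalk, ih, and_assoc]

/-- A walk extended by an edge `e` it already uses is cut back to its prefix ending with `e`. -/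
lemma exists_nodup_isWalk {F : Finset E} (h : G.ReachAvoid F u v) :
    ∃ l : List E, l.Nodup ∧ G.IsWalk l u v := by
  induction h with
  | refl => exact ⟨[], List.nodup_nil, rfl⟩
  | tail _ hstep ih =>
    obtain ⟨l, hnd, hl⟩ := ih
    obtain ⟨e, -, hsrc, htgt⟩ := hstep
    by_cases he : e ∈ l
    · obtain ⟨l₁, l₂, rfl⟩ := List.append_of_mem he
      obtain ⟨w, h₁, h₂, -⟩ := isWalk_append.mp hl
      exact ⟨l₁ ++ [e], hnd.sublist (by simp), isWalk_append.mpr ⟨w, h₁, h₂, htgt⟩⟩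
    · refine ⟨l ++ [e], List.nodup_append.mpr ⟨hnd, List.nodup_singleton e, ?_⟩,
        isWalk_append.mpr ⟨_, hl, hsrc, htgt⟩⟩
      simp only [List.mem_singleton]
      rintro a ha b rfl rfl
      exact he ha

open Classical in
noncomputable def reachSet [Fintype V] (G : Digraph' V E) (F : Finset E) (u : V) : Finset V :=
  univ.filter (G.ReachAvoid F u)

@[simp]
lemma mem_reachSet [Fintype V] {F : Finset E} : v ∈ G.reachSet F u ↔ G.ReachAvoid F u v := by
  simp [reachSet]

lemma sum_le_card_of_le_one {g : E → ℕ} (hg : ∀ e, g e ≤ 1) (S : Finset E) :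
    ∑ e ∈ S, (g e : ℤ) ≤ S.card := by
  simpa using sum_le_card_nsmul S (fun e => (g e : ℤ)) 1 fun e _ => by exact_mod_cast hg e

variable [DecidableEq V]

def incidence (G : Digraph' V E) (e : E) (v : V) : ℤ :=
  (if G.src e = v then 1 else 0) - (if G.tgt e = v then 1 else 0)

lemma sum_incidence_of_isWalk {l : List E} (hl : G.IsWalk l u v) (x : V) :
    (l.map (G.incidence · x)).sum = (if u = x then 1 else 0) - (if v = x then 1 else 0) := by
  induction l generalizing u with
  | nil => cases hl; simp
  | cons e l ih =>
    obtain ⟨rfl, hl⟩ := hl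
    simp only [List.map_cons, List.sum_cons]
    rw [ih hl, incidence]
    ring

lemma incidence_residual (e : E) (x : V) :
    (G.residual f).incidence e x = if f e = 1 then -G.incidence e x else G.incidence e x := by
  by_cases he : f e = 1 <;> simp [incidence, residual, he]

variable [Fintype E]

def netOutflow (G : Digraph' V E) (h : E → ℤ) (v : V) : ℤ :=
  ∑ e, h e * G.incidence e v

def edgesOut (G : Digraph' V E) (A : Finset V) : Finset E :=
  univ.filter (fun e => G.src e ∈ A ∧ G.tgt e ∉ A)

def edgesIn (G : Digraph' V E) (A : Finset V) : Finset E :=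
  univ.filter (fun e => G.src e ∉ A ∧ G.tgt e ∈ A)

@[simp]
lemma mem_edgesOut {e : E} : e ∈ G.edgesOut A ↔ G.src e ∈ A ∧ G.tgt e ∉ A := by
  simp [edgesOut]

@[simp]
lemma mem_edgesIn {e : E} : e ∈ G.edgesIn A ↔ G.src e ∉ A ∧ G.tgt e ∈ A := by
  simp [edgesIn]

lemma netOutflow_add (h₁ h₂ : E → ℤ) (v : V) :
    G.netOutflow (fun e => h₁ e + h₂ e) v = G.netOutflow h₁ v + G.netOutflow h₂ v := by
  simp only [netOutflow, add_mul, sum_add_distrib]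

lemma netOutflow_natCast (h : E → ℕ) (v : V) :
    G.netOutflow (fun e => (h e : ℤ)) v =
      ∑ e ∈ univ.filter (fun e => G.src e = v), (h e : ℤ) -
        ∑ e ∈ univ.filter (fun e => G.tgt e = v), (h e : ℤ) := by
  simp [netOutflow, incidence, mul_sub, sum_sub_distrib, sum_filter]

lemma flowValue_eq_netOutflow (h : E → ℕ) :
    G.flowValue s h = G.netOutflow (fun e => (h e : ℤ)) s :=
  (netOutflow_natCast h s).symm

lemma conserves_iff_netOutflow {h : E → ℕ} :
    G.Conserves s t h ↔
      ∀ v, v ≠ s → v ≠ t → G.netOutflow (fun e => (h e : ℤ)) v = 0 := by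
  simp only [Conserves, netOutflow_natCast, sub_eq_zero,
    eq_comm (a := ∑ e ∈ _ with G.src e = _, _)]
  exact forall₃_congr fun _ _ _ => by exact_mod_cast Iff.rfl

lemma netOutflow_indicator_of_isWalk [DecidableEq E] {l : List E} (hnd : l.Nodup)
    (hl : G.IsWalk l u v) (x : V) :
    G.netOutflow (fun e => if e ∈ l then 1 else 0) x =
      (if u = x then 1 else 0) - (if v = x then 1 else 0) := by
  rw [← sum_incidence_of_isWalk hl, ← List.sum_toFinset _ hnd, netOutflow]
  simp only [ite_mul, one_mul, zero_mul]
  rw [← sum_filter]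
  congr 1
  ext e
  simp

lemma netOutflow_residual (h : E → ℤ) (x : V) :
    (G.residual f).netOutflow h x = G.netOutflow (fun e => if f e = 1 then -h e else h e) x := by
  simp only [netOutflow, incidence_residual]
  exact sum_congr rfl fun e _ => by split_ifs <;> ring

lemma sum_netOutflow [Fintype V] (h : E → ℤ) (A : Finset V) :
    ∑ v ∈ A, G.netOutflow h v = ∑ e ∈ G.edgesOut A, h e - ∑ e ∈ G.edgesIn A, h e := by
  have hedge : ∀ e, ∑ v ∈ A, h e * G.incidence e v =
      (if G.src e ∈ A ∧ G.tgt e ∉ A then h e else 0) -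
        (if G.src e ∉ A ∧ G.tgt e ∈ A then h e else 0) := by
    intro e
    simp only [incidence, mul_sub, sum_sub_distrib, mul_ite, mul_one, mul_zero, sum_ite_eq]
    by_cases hs : G.src e ∈ A <;> by_cases ht : G.tgt e ∈ A <;> simp [hs, ht]
  simp only [netOutflow]
  rw [sum_comm, sum_congr rfl fun e _ => hedge e, sum_sub_distrib, ← sum_filter, ← sum_filter]
  rfl

lemma netOutflow_of_conserves [Fintype V] (hst : s ≠ t) (hf : G.Conserves s t f) (v : V) :
    G.netOutflow (fun e => (f e : ℤ)) v =
      (if v = s then G.flowValue s f else 0) - (if v = t then G.flowValue s f else 0) := by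
  have hzero := conserves_iff_netOutflow.mp hf
  -- summed over all vertices the net outflows cancel, so the one at `t` is minus the one at `s`
  have htotal :
      G.netOutflow (fun e => (f e : ℤ)) s + G.netOutflow (fun e => (f e : ℤ)) t = 0 := by
    rw [← Fintype.sum_eq_add s t hst fun x hx => hzero x hx.1 hx.2, sum_netOutflow]
    simp [edgesOut, edgesIn]
  rw [flowValue_eq_netOutflow]
  by_cases hs : v = s
  · subst hs; simp [hst]
  by_cases ht : v = t
  · subst ht; simp [hs]; omega
  simp [hs, ht, hzero v hs ht]

lemma sum_edgesOut_sub_sum_edgesIn [Fintype V] (hst : s ≠ t) (hf : G.Conserves s t f)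
    (A : Finset V) :
    ∑ e ∈ G.edgesOut A, (f e : ℤ) - ∑ e ∈ G.edgesIn A, (f e : ℤ) =
      (if s ∈ A then G.flowValue s f else 0) - (if t ∈ A then G.flowValue s f else 0) := by
  rw [← sum_netOutflow]
  simp only [netOutflow_of_conserves hst hf, sum_sub_distrib, sum_ite_eq']

lemma Conserves.forall_edgesIn_eq_zero [Fintype V] (hf : G.Conserves s t f) (hst : s ≠ t)
    (hval : 0 ≤ G.flowValue s f) (ht : t ∉ A) (hout : ∀ e ∈ G.edgesOut A, f e = 0) :
    ∀ e ∈ G.edgesIn A, f e = 0 := by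
  have h := sum_edgesOut_sub_sum_edgesIn hst hf A
  rw [sum_eq_zero fun e he => by simp [hout e he], if_neg ht] at h
  have hnonneg : 0 ≤ ∑ e ∈ G.edgesIn A, (f e : ℤ) := by positivity
  have hin : ∑ e ∈ G.edgesIn A, f e = 0 := by
    have : ∑ e ∈ G.edgesIn A, (f e : ℤ) = 0 := by split_ifs at h <;> omega
    exact_mod_cast this
  exact sum_eq_zero_iff.mp hin

lemma Conserves.forall_edgesOut_eq_zero [Fintype V] (hf : G.Conserves s t f) (hst : s ≠ t)
    (hval : 0 ≤ G.flowValue s f) (hs : s ∉ A) (hin : ∀ e ∈ G.edgesIn A, f e = 0) :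
    ∀ e ∈ G.edgesOut A, f e = 0 := by
  have h := sum_edgesOut_sub_sum_edgesIn hst hf A
  rw [sum_eq_zero (s := G.edgesIn A) fun e he => by simp [hin e he], if_neg hs] at h
  have hnonneg : 0 ≤ ∑ e ∈ G.edgesOut A, (f e : ℤ) := by positivity
  have hout : ∑ e ∈ G.edgesOut A, f e = 0 := by
    have : ∑ e ∈ G.edgesOut A, (f e : ℤ) = 0 := by split_ifs at h <;> omega
    exact_mod_cast this
  exact sum_eq_zero_iff.mp hout

lemma IsFlow.eq_zero_or_eq_one (hf : G.IsFlow s t f) (e : E) : f e = 0 ∨ f e = 1 :=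
  Nat.le_one_iff_eq_zero_or_eq_one.mp (hf.1 e)

structure IsMaxFlow (G : Digraph' V E) (s t : V) (lam : ℕ) (f : E → ℕ) : Prop where
  isFlow : G.IsFlow s t f
  flowValue_eq : G.flowValue s f = lam
  flowValue_le : ∀ g, G.IsFlow s t g → G.flowValue s g ≤ lam

lemma IsMaxFlowValue.exists_isMaxFlow (hmax : G.IsMaxFlowValue s t ∅ lam) :
    ∃ f, G.IsMaxFlow s t lam f := by
  obtain ⟨⟨f, hf, -, hval⟩, hle⟩ := hmax
  exact ⟨f, hf, hval, fun g hg => hle g hg (by simp)⟩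

lemma IsMaxFlow.flowValue_nonneg (hmf : G.IsMaxFlow s t lam f) : 0 ≤ G.flowValue s f :=
  hmf.flowValue_eq ▸ Int.natCast_nonneg lam

/-- Augmenting along an `s`-`t` walk of the residual graph would give a larger flow. -/
lemma IsMaxFlow.not_reachAvoid_residual [DecidableEq E] (hst : s ≠ t)
    (hmf : G.IsMaxFlow s t lam f) : ¬ (G.residual f).ReachAvoid ∅ s t := by
  intro h
  obtain ⟨l, hnd, hl⟩ := exists_nodup_isWalk h
  set g : E → ℕ := fun e => if e ∈ l then 1 - f e else f e
  have hnet : ∀ x, G.netOutflow (fun e => (g e : ℤ)) x =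
      G.netOutflow (fun e => (f e : ℤ)) x +
        ((if s = x then 1 else 0) - (if t = x then 1 else 0)) := by
    intro x
    rw [← netOutflow_indicator_of_isWalk hnd hl, netOutflow_residual, ← netOutflow_add]
    congr 1
    funext e
    rcases hmf.isFlow.eq_zero_or_eq_one e with he | he <;>
      by_cases hel : e ∈ l <;> simp [g, he, hel]
  have hg : G.IsFlow s t g := by
    refine ⟨fun e => ?_, conserves_iff_netOutflow.mpr fun x hxs hxt => ?_⟩
    · have := hmf.isFlow.1 e
      simp only [g]
      split_ifs <;> omega
    · rw [hnet, conserves_iff_netOutflow.mp hmf.isFlow.2 x hxs hxt]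
      simp [Ne.symm hxs, Ne.symm hxt]
  have := hmf.flowValue_le g hg
  rw [flowValue_eq_netOutflow, hnet, ← flowValue_eq_netOutflow, hmf.flowValue_eq] at this
  simp [Ne.symm hst] at this

lemma edgesOut_reachSet_subset [Fintype V] (F : Finset E) (u : V) :
    G.edgesOut (G.reachSet F u) ⊆ F := by
  intro e he
  rw [mem_edgesOut, mem_reachSet, mem_reachSet] at he
  by_contra heF
  exact he.2 (he.1.tail ⟨e, heF, rfl, rfl⟩)

lemma isCut_edgesOut (hs : s ∈ A) (ht : t ∉ A) : G.IsCut s t (G.edgesOut A) := by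
  have hA : ∀ v, G.ReachAvoid (G.edgesOut A) s v → v ∈ A := by
    intro v h
    induction h with
    | refl => exact hs
    | tail _ hstep ih =>
      obtain ⟨e, he, rfl, rfl⟩ := hstep
      by_contra hv
      exact he (mem_edgesOut.mpr ⟨ih, hv⟩)
  exact fun h => ht (hA t h)

lemma flowValue_le_card_of_isCut [Fintype V] (hf : G.IsFlow s t f) {C : Finset E}
    (hC : G.IsCut s t C) : G.flowValue s f ≤ C.card := by
  set A := G.reachSet C s
  have hs : s ∈ A := mem_reachSet.mpr .refl
  have ht : t ∉ A := fun h => hC (mem_reachSet.mp h)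
  have hcross := sum_edgesOut_sub_sum_edgesIn (ne_of_mem_of_not_mem hs ht) hf.2 A
  rw [if_pos hs, if_neg ht] at hcross
  have hin : 0 ≤ ∑ e ∈ G.edgesIn A, (f e : ℤ) := by positivity
  have hout := sum_le_card_of_le_one hf.1 (G.edgesOut A)
  have hcard : ((G.edgesOut A).card : ℤ) ≤ C.card := by
    exact_mod_cast card_le_card (edgesOut_reachSet_subset C s)
  omega

lemma isMinCutPartition_of_saturated [Fintype V] (hf : G.Conserves s t f)
    (hval : G.flowValue s f = lam) (hs : s ∈ A) (ht : t ∉ A)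
    (hout : ∀ e ∈ G.edgesOut A, f e = 1) (hin : ∀ e ∈ G.edgesIn A, f e = 0) :
    G.IsMinCutPartition s t lam A := by
  have hcross := sum_edgesOut_sub_sum_edgesIn (ne_of_mem_of_not_mem hs ht) hf A
  have h1 : ∑ e ∈ G.edgesOut A, (f e : ℤ) = ∑ _e ∈ G.edgesOut A, 1 :=
    sum_congr rfl fun e he => by simp [hout e he]
  have h0 : ∑ e ∈ G.edgesIn A, (f e : ℤ) = 0 := sum_eq_zero fun e he => by simp [hin e he]
  rw [if_pos hs, if_neg ht, hval, h1, h0] at hcross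
  refine ⟨hs, ht, ?_⟩
  have : ((G.edgesOut A).card : ℤ) = lam := by simpa using hcross
  exact_mod_cast this

lemma IsMinCutPartition.saturated [Fintype V] (hA : G.IsMinCutPartition s t lam A)
    (hf : G.IsFlow s t f) (hval : G.flowValue s f = lam) :
    (∀ e ∈ G.edgesOut A, f e = 1) ∧ ∀ e ∈ G.edgesIn A, f e = 0 := by
  have hcross := sum_edgesOut_sub_sum_edgesIn (ne_of_mem_of_not_mem hA.1 hA.2.1) hf.2 A
  rw [if_pos hA.1, if_neg hA.2.1, hval] at hcross
  have hcard : ((G.edgesOut A).card : ℤ) = lam := by exact_mod_cast hA.2.2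
  have hin : 0 ≤ ∑ e ∈ G.edgesIn A, (f e : ℤ) := by positivity
  have hout := sum_le_card_of_le_one hf.1 (G.edgesOut A)
  have hout' : ∑ e ∈ G.edgesOut A, f e = (G.edgesOut A).card := by
    have : ∑ e ∈ G.edgesOut A, (f e : ℤ) = (G.edgesOut A).card := by omega
    exact_mod_cast this
  have hin' : ∑ e ∈ G.edgesIn A, f e = 0 := by
    have : ∑ e ∈ G.edgesIn A, (f e : ℤ) = 0 := by omega
    exact_mod_cast this
  refine ⟨fun e he => (hf.eq_zero_or_eq_one e).resolve_left fun h0 => ?_,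
    sum_eq_zero_iff.mp hin'⟩
  have hlt : ∑ e ∈ G.edgesOut A, f e < ∑ _e ∈ G.edgesOut A, 1 :=
    sum_lt_sum (fun e _ => hf.1 e) ⟨e, he, by omega⟩
  simp [hout'] at hlt

lemma IsMinCutPartition.isMinCut_edgesOut [Fintype V] (hA : G.IsMinCutPartition s t lam A)
    (hf : G.IsFlow s t f) (hval : G.flowValue s f = lam) : G.IsMinCut s t (G.edgesOut A) := by
  refine ⟨isCut_edgesOut hA.1 hA.2.1, fun C hC => ?_⟩
  have := flowValue_le_card_of_isCut hf hC
  rw [hval] at this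
  exact hA.2.2 ▸ (by exact_mod_cast this)

lemma IsMinCutPartition.critical [Fintype V] (hA : G.IsMinCutPartition s t lam A)
    (hf : G.IsFlow s t f) (hval : G.flowValue s f = lam) {e : E} (he : e ∈ G.edgesOut A) :
    G.Critical s t e :=
  ⟨_, hA.isMinCut_edgesOut hf hval, he⟩

lemma IsMaxFlow.exists_isMinCutPartition [Fintype V] [DecidableEq E] (hst : s ≠ t)
    (hmf : G.IsMaxFlow s t lam f) : ∃ A, G.IsMinCutPartition s t lam A := by
  set A := (G.residual f).reachSet ∅ s
  have hres := edgesOut_reachSet_subset (G := G.residual f) ∅ s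
  refine ⟨A, isMinCutPartition_of_saturated hmf.isFlow.2 hmf.flowValue_eq
    (mem_reachSet.mpr .refl) (fun h => hmf.not_reachAvoid_residual hst (mem_reachSet.mp h))
    (fun e he => (hmf.isFlow.eq_zero_or_eq_one e).resolve_left fun h0 => ?_)
    fun e he => (hmf.isFlow.eq_zero_or_eq_one e).resolve_right fun h1 => ?_⟩
  · have hres' : e ∈ (G.residual f).edgesOut A := by
      simp only [mem_edgesOut, residual, h0, zero_ne_one, if_false] at he ⊢
      exact he
    simpa using hres hres'
  · have hres' : e ∈ (G.residual f).edgesOut A := by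
      simp only [mem_edgesOut, mem_edgesIn, residual, h1, if_true] at he ⊢
      exact he.symm
    simpa using hres hres'

lemma IsMaxFlow.exists_isMinCutPartition_of_isMinCut [Fintype V] [DecidableEq E]
    (hst : s ≠ t) (hmf : G.IsMaxFlow s t lam f) {C : Finset E} (hC : G.IsMinCut s t C) :
    ∃ A, G.IsMinCutPartition s t lam A ∧ G.edgesOut A = C := by
  obtain ⟨B, hB⟩ := hmf.exists_isMinCutPartition hst
  set A := G.reachSet C s
  have hs : s ∈ A := mem_reachSet.mpr .refl
  have ht : t ∉ A := fun h => hC.1 (mem_reachSet.mp h)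
  have hAC : G.edgesOut A = C :=
    eq_of_subset_of_card_le (edgesOut_reachSet_subset C s) (hC.2 _ (isCut_edgesOut hs ht))
  have hle : C.card ≤ lam := hB.2.2 ▸ hC.2 _ (isCut_edgesOut hB.1 hB.2.1)
  have hge : (lam : ℤ) ≤ C.card :=
    hmf.flowValue_eq ▸ flowValue_le_card_of_isCut hmf.isFlow hC.1
  exact ⟨A, ⟨hs, ht, by show (G.edgesOut A).card = lam; rw [hAC]; omega⟩, hAC⟩

lemma IsMaxFlow.exists_mem_edgesOut_of_critical [Fintype V] [DecidableEq E] (hst : s ≠ t)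
    (hmf : G.IsMaxFlow s t lam f) {e : E} (he : G.Critical s t e) :
    ∃ A, G.IsMinCutPartition s t lam A ∧ e ∈ G.edgesOut A := by
  obtain ⟨C, hC, heC⟩ := he
  obtain ⟨A, hA, rfl⟩ := hmf.exists_isMinCutPartition_of_isMinCut hst hC
  exact ⟨A, hA, heC⟩

lemma IsMaxFlow.eq_one_of_critical [Fintype V] [DecidableEq E] (hst : s ≠ t)
    (hmf : G.IsMaxFlow s t lam f) {e : E} (he : G.Critical s t e) : f e = 1 := by
  obtain ⟨A, hA, heA⟩ := hmf.exists_mem_edgesOut_of_critical hst he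
  exact (hA.saturated hmf.isFlow hmf.flowValue_eq).1 e heA

lemma IsMaxFlow.exists_critical [Fintype V] [DecidableEq E] (hst : s ≠ t)
    (hmf : G.IsMaxFlow s t lam f) (hreach : G.ReachAvoid ∅ s t) : ∃ e, G.Critical s t e := by
  obtain ⟨A, hA⟩ := hmf.exists_isMinCutPartition hst
  obtain ⟨e, he⟩ : (G.edgesOut A).Nonempty := by
    rw [nonempty_iff_ne_empty]
    intro h
    exact isCut_edgesOut (G := G) hA.1 hA.2.1 (h ▸ hreach)
  exact ⟨e, hA.critical hmf.isFlow hmf.flowValue_eq he⟩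

lemma dStep_of_eq_one [Fintype V] (hf : G.IsFlow s t f) (hval : G.flowValue s f = lam) {e : E}
    (he : f e = 1) : G.DStep s t lam (G.src e) (G.tgt e) := by
  by_cases hequiv : G.VEquiv s t lam (G.src e) (G.tgt e)
  · exact Or.inl hequiv
  refine Or.inr ⟨e, hequiv, Or.inl ⟨?_, rfl, rfl⟩⟩
  simp only [VEquiv, not_forall] at hequiv
  obtain ⟨A, hA, hsep⟩ := hequiv
  by_cases hsrc : G.src e ∈ A
  · exact hA.critical hf hval (mem_edgesOut.mpr ⟨hsrc, by tauto⟩)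
  · have := (hA.saturated hf hval).2 e (mem_edgesIn.mpr ⟨hsrc, by tauto⟩)
    omega

lemma IsMaxFlow.dStep_of_eq_zero [Fintype V] [DecidableEq E] (hst : s ≠ t)
    (hmf : G.IsMaxFlow s t lam f) {e : E} (he : f e = 0) :
    G.DStep s t lam (G.tgt e) (G.src e) := by
  by_cases hequiv : G.VEquiv s t lam (G.src e) (G.tgt e)
  · exact Or.inl fun A hA => (hequiv A hA).symm
  refine Or.inr ⟨e, hequiv, Or.inr ⟨fun hcrit => ?_, rfl, rfl⟩⟩
  have := hmf.eq_one_of_critical hst hcrit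
  omega

lemma IsMaxFlow.mem_of_dStep [Fintype V] [DecidableEq E] (hst : s ≠ t)
    (hmf : G.IsMaxFlow s t lam f) (hA : G.IsMinCutPartition s t lam A)
    (h : G.DStep s t lam u v) (hv : v ∈ A) : u ∈ A := by
  rcases h with hequiv | ⟨e, -, ⟨hcrit, rfl, rfl⟩ | ⟨hncrit, rfl, rfl⟩⟩
  · exact (hequiv A hA).mpr hv
  · by_contra hu
    have := (hA.saturated hmf.isFlow hmf.flowValue_eq).2 e (mem_edgesIn.mpr ⟨hu, hv⟩)
    have := hmf.eq_one_of_critical hst hcrit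
    omega
  · by_contra hu
    exact hncrit (hA.critical hmf.isFlow hmf.flowValue_eq (mem_edgesOut.mpr ⟨hv, hu⟩))

lemma IsMaxFlow.mem_of_dReach [Fintype V] [DecidableEq E] (hst : s ≠ t)
    (hmf : G.IsMaxFlow s t lam f) (hA : G.IsMinCutPartition s t lam A)
    (h : G.DReach s t lam u v) (hv : v ∈ A) : u ∈ A := by
  induction h with
  | refl => exact hv
  | tail _ hstep ih => exact ih (hmf.mem_of_dStep hst hA hstep hv)

lemma IsMaxFlow.not_dReach_tgt_src [Fintype V] [DecidableEq E] (hst : s ≠ t)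
    (hmf : G.IsMaxFlow s t lam f) {e : E} (he : G.Critical s t e) :
    ¬ G.DReach s t lam (G.tgt e) (G.src e) := by
  obtain ⟨A, hA, heA⟩ := hmf.exists_mem_edgesOut_of_critical hst he
  rw [mem_edgesOut] at heA
  exact fun h => heA.2 (hmf.mem_of_dReach hst hA h heA.1)

lemma IsMaxFlow.isMinCutPartition_of_dStep_closed [Fintype V] [DecidableEq E] (hst : s ≠ t)
    (hmf : G.IsMaxFlow s t lam f) (hs : s ∈ A) (ht : t ∉ A)
    (hclosed : ∀ u v, G.DStep s t lam u v → v ∈ A → u ∈ A) :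
    G.IsMinCutPartition s t lam A := by
  refine isMinCutPartition_of_saturated hmf.isFlow.2 hmf.flowValue_eq hs ht
    (fun e he => (hmf.isFlow.eq_zero_or_eq_one e).resolve_left fun h0 => ?_)
    fun e he => (hmf.isFlow.eq_zero_or_eq_one e).resolve_right fun h1 => ?_
  · rw [mem_edgesOut] at he
    exact he.2 (hclosed _ _ (hmf.dStep_of_eq_zero hst h0) he.1)
  · rw [mem_edgesIn] at he
    exact he.1 (hclosed _ _ (dStep_of_eq_one hmf.isFlow hmf.flowValue_eq h1) he.2)

lemma IsMaxFlow.dReach_src_of_mem_edgesOut [Fintype V] (hst : s ≠ t)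
    (hmf : G.IsMaxFlow s t lam f) (hA : G.IsMinCutPartition s t lam A) {e : E}
    (he : e ∈ G.edgesOut A) : G.DReach s t lam s (G.src e) := by
  classical
  obtain ⟨hout, hin⟩ := hA.saturated hmf.isFlow hmf.flowValue_eq
  by_contra hne
  -- no flow enters the part of `A` not `D`-reachable from `s`, so none leaves it through `e`
  set X := A.filter fun x => ¬ G.DReach s t lam s x
  have hX : ∀ e ∈ G.edgesIn X, f e = 0 := by
    intro e₁ he₁
    simp only [X, mem_edgesIn, mem_filter, not_and, not_not] at he₁
    refine (hmf.isFlow.eq_zero_or_eq_one e₁).resolve_right fun h1 => ?_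
    have hsrc : G.src e₁ ∈ A := by
      by_contra h
      exact absurd (hin e₁ (mem_edgesIn.mpr ⟨h, he₁.2.1⟩)) (by omega)
    exact he₁.2.2 ((he₁.1 hsrc).tail (dStep_of_eq_one hmf.isFlow hmf.flowValue_eq h1))
  have := hmf.isFlow.2.forall_edgesOut_eq_zero hst hmf.flowValue_nonneg
    (by simp only [X, mem_filter, not_and, not_not]; exact fun _ => .refl) hX e
    (by simp only [X, mem_edgesOut, mem_filter] at he ⊢; tauto)
  rw [hout e he] at this
  exact one_ne_zero this

lemma IsMaxFlow.dReach_tgt_of_mem_edgesOut [Fintype V] (hst : s ≠ t)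
    (hmf : G.IsMaxFlow s t lam f) (hA : G.IsMinCutPartition s t lam A) {e : E}
    (he : e ∈ G.edgesOut A) : G.DReach s t lam (G.tgt e) t := by
  classical
  obtain ⟨hout, hin⟩ := hA.saturated hmf.isFlow hmf.flowValue_eq
  by_contra hne
  set X := univ.filter fun x => x ∉ A ∧ ¬ G.DReach s t lam x t
  have hX : ∀ e ∈ G.edgesOut X, f e = 0 := by
    intro e₁ he₁
    simp only [X, mem_edgesOut, mem_filter, mem_univ, true_and, not_and, not_not] at he₁
    refine (hmf.isFlow.eq_zero_or_eq_one e₁).resolve_right fun h1 => ?_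
    have htgt : G.tgt e₁ ∉ A := by
      intro h
      exact absurd (hin e₁ (mem_edgesIn.mpr ⟨he₁.1.1, h⟩)) (by omega)
    exact he₁.1.2 ((he₁.2 htgt).head (dStep_of_eq_one hmf.isFlow hmf.flowValue_eq h1))
  have := hmf.isFlow.2.forall_edgesIn_eq_zero hst hmf.flowValue_nonneg
    (by simp only [X, mem_filter, mem_univ, true_and, not_and, not_not]; exact fun _ => .refl)
    hX e
    (by simp only [X, mem_edgesIn, mem_edgesOut, mem_filter, mem_univ, true_and] at he ⊢; tauto)
  rw [hout e he] at this
  exact one_ne_zero this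

lemma IsMaxFlow.exists_mem_edgesOut_dReach_of_tgt_mem [Fintype V] [DecidableEq E]
    (hst : s ≠ t) (hmf : G.IsMaxFlow s t lam f) (ht : t ∉ A) {e' : E}
    (he' : G.Critical s t e') (htgt : G.tgt e' ∈ A) :
    ∃ e ∈ G.edgesOut A, G.DReach s t lam (G.tgt e') (G.src e) := by
  classical
  by_contra! hno
  -- no flow leaves the part of `A` that is `D`-reachable from the head of `e'`,
  -- so none enters it, although `e'` carries flow into it
  set Y := A.filter fun x => G.DReach s t lam (G.tgt e') x
  have hY : ∀ e ∈ G.edgesOut Y, f e = 0 := by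
    intro e₁ he₁
    simp only [Y, mem_edgesOut, mem_filter, not_and] at he₁
    refine (hmf.isFlow.eq_zero_or_eq_one e₁).resolve_right fun h1 => ?_
    have hreach := he₁.1.2.tail (dStep_of_eq_one hmf.isFlow hmf.flowValue_eq h1)
    have htgt₁ : G.tgt e₁ ∉ A := fun h => he₁.2 h hreach
    exact hno e₁ (mem_edgesOut.mpr ⟨he₁.1.1, htgt₁⟩) he₁.1.2
  have := hmf.isFlow.2.forall_edgesIn_eq_zero hst hmf.flowValue_nonneg (by simp [Y, ht]) hY e'
    (by simp [Y, htgt, hmf.not_dReach_tgt_src hst he',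
      show G.DReach s t lam (G.tgt e') _ from .refl])
  rw [hmf.eq_one_of_critical hst he'] at this
  exact one_ne_zero this

lemma IsMaxFlow.exists_mem_edgesOut_dReach_of_src_not_mem [Fintype V] [DecidableEq E]
    (hst : s ≠ t) (hmf : G.IsMaxFlow s t lam f) (hs : s ∈ A) {e' : E}
    (he' : G.Critical s t e') (hsrc : G.src e' ∉ A) :
    ∃ e ∈ G.edgesOut A, G.DReach s t lam (G.tgt e) (G.src e') := by
  classical
  by_contra! hno
  set Y := univ.filter fun x => x ∉ A ∧ G.DReach s t lam x (G.src e')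
  have hY : ∀ e ∈ G.edgesIn Y, f e = 0 := by
    intro e₁ he₁
    simp only [Y, mem_edgesIn, mem_filter, mem_univ, true_and, not_and] at he₁
    refine (hmf.isFlow.eq_zero_or_eq_one e₁).resolve_right fun h1 => ?_
    have hreach := he₁.2.2.head (dStep_of_eq_one hmf.isFlow hmf.flowValue_eq h1)
    have hsrc₁ : G.src e₁ ∈ A := by
      by_contra h
      exact he₁.1 h hreach
    exact hno e₁ (mem_edgesOut.mpr ⟨hsrc₁, he₁.2.1⟩) he₁.2.2
  have := hmf.isFlow.2.forall_edgesOut_eq_zero hst hmf.flowValue_nonneg (by simp [Y, hs]) hY e'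
    (by simp [Y, hsrc, hmf.not_dReach_tgt_src hst he',
      show G.DReach s t lam (G.src e') _ from .refl])
  rw [hmf.eq_one_of_critical hst he'] at this
  exact one_ne_zero this

lemma IsMaxFlow.edgeLE_of_dReach [Fintype V] [DecidableEq E] (hst : s ≠ t)
    (hmf : G.IsMaxFlow s t lam f) {e e' : E} (he : G.Critical s t e) (he' : G.Critical s t e')
    (h : G.DReach s t lam (G.tgt e) (G.src e')) : G.EdgeLE s t lam e e' := by
  obtain ⟨A, hA, heA⟩ := hmf.exists_mem_edgesOut_of_critical hst he
  obtain ⟨A', hA', heA'⟩ := hmf.exists_mem_edgesOut_of_critical hst he'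
  exact Or.inr ⟨_, _, _, _, Or.inl ⟨he, rfl, rfl⟩, Or.inl ⟨he', rfl, rfl⟩,
    hmf.dReach_src_of_mem_edgesOut hst hA heA, h, hmf.dReach_tgt_of_mem_edgesOut hst hA' heA'⟩

lemma IsMaxFlow.edgeAntichain_edgesOut [Fintype V] [DecidableEq E] (hst : s ≠ t)
    (hmf : G.IsMaxFlow s t lam f) (hA : G.IsMinCutPartition s t lam A) :
    G.EdgeAntichain s t lam (G.edgesOut A) := by
  have hcrit : ∀ e ∈ G.edgesOut A, G.Critical s t e :=
    fun e he => hA.critical hmf.isFlow hmf.flowValue_eq he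
  rintro e he e' he' (rfl | ⟨u, v, u', v', hd, hd', -, hvu', -⟩)
  · rfl
  obtain ⟨-, rfl, rfl⟩ := hd.resolve_right fun h => h.1 (hcrit e he)
  obtain ⟨-, rfl, rfl⟩ := hd'.resolve_right fun h => h.1 (hcrit e' he')
  exact absurd (hmf.mem_of_dReach hst hA hvu' (mem_edgesOut.mp he').1) (mem_edgesOut.mp he).2

lemma IsMaxFlow.eq_edgesOut_of_subset [Fintype V] [DecidableEq E] (hst : s ≠ t)
    (hmf : G.IsMaxFlow s t lam f) (hA : G.IsMinCutPartition s t lam A) {C : Finset E}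
    (hsub : G.edgesOut A ⊆ C) (hcrit : ∀ e ∈ C, G.Critical s t e)
    (hanti : G.EdgeAntichain s t lam C) : C = G.edgesOut A := by
  have hcritA : ∀ e ∈ G.edgesOut A, G.Critical s t e :=
    fun e he => hA.critical hmf.isFlow hmf.flowValue_eq he
  refine Subset.antisymm (fun e' he' => ?_) hsub
  by_cases hsrc : G.src e' ∈ A
  · by_cases htgt : G.tgt e' ∈ A
    · obtain ⟨e, he, h⟩ :=
        hmf.exists_mem_edgesOut_dReach_of_tgt_mem hst hA.2.1 (hcrit e' he') htgt
      rwa [hanti e' he' e (hsub he) (hmf.edgeLE_of_dReach hst (hcrit e' he') (hcritA e he) h)]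
    · exact mem_edgesOut.mpr ⟨hsrc, htgt⟩
  · obtain ⟨e, he, h⟩ :=
      hmf.exists_mem_edgesOut_dReach_of_src_not_mem hst hA.1 (hcrit e' he') hsrc
    rwa [← hanti e (hsub he) e' he' (hmf.edgeLE_of_dReach hst (hcritA e he) (hcrit e' he') h)]

open Classical in
/-- For a maximal antichain `C` of critical edges, the source side of the min-cut `C`. -/
noncomputable def notReachedFromHeads [Fintype V] (G : Digraph' V E) (s t : V) (lam : ℕ)
    (C : Finset E) : Finset V :=
  univ.filter fun x => ∀ e ∈ C, ¬ G.DReach s t lam (G.tgt e) x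

lemma mem_notReachedFromHeads [Fintype V] {C : Finset E} {x : V} :
    x ∈ G.notReachedFromHeads s t lam C ↔ ∀ e ∈ C, ¬ G.DReach s t lam (G.tgt e) x := by
  simp [notReachedFromHeads]

lemma IsMaxFlow.isMinCutPartition_notReachedFromHeads [Fintype V] [DecidableEq E]
    (hst : s ≠ t) (hmf : G.IsMaxFlow s t lam f) {C : Finset E} (hne : C.Nonempty)
    (hcrit : ∀ e ∈ C, G.Critical s t e) :
    G.IsMinCutPartition s t lam (G.notReachedFromHeads s t lam C) := by
  refine hmf.isMinCutPartition_of_dStep_closed hst (mem_notReachedFromHeads.mpr ?_)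
    (fun ht => ?_) fun u v huv hv => mem_notReachedFromHeads.mpr ?_
  · intro e he h
    obtain ⟨A, hA, heA⟩ := hmf.exists_mem_edgesOut_of_critical hst (hcrit e he)
    exact hmf.not_dReach_tgt_src hst (hcrit e he)
      (h.trans (hmf.dReach_src_of_mem_edgesOut hst hA heA))
  · obtain ⟨e, he⟩ := hne
    obtain ⟨A, hA, heA⟩ := hmf.exists_mem_edgesOut_of_critical hst (hcrit e he)
    exact mem_notReachedFromHeads.mp ht e he (hmf.dReach_tgt_of_mem_edgesOut hst hA heA)
  · exact fun e he h => mem_notReachedFromHeads.mp hv e he (h.tail huv)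

lemma IsMaxFlow.subset_edgesOut_notReachedFromHeads [Fintype V] [DecidableEq E]
    (hst : s ≠ t) (hmf : G.IsMaxFlow s t lam f) {C : Finset E}
    (hcrit : ∀ e ∈ C, G.Critical s t e) (hanti : G.EdgeAntichain s t lam C) :
    C ⊆ G.edgesOut (G.notReachedFromHeads s t lam C) := by
  intro e he
  refine mem_edgesOut.mpr ⟨mem_notReachedFromHeads.mpr fun e₂ he₂ h => ?_,
    fun h => mem_notReachedFromHeads.mp h e he .refl⟩
  obtain rfl := hanti e₂ he₂ e he (hmf.edgeLE_of_dReach hst (hcrit e₂ he₂) (hcrit e he) h)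
  exact hmf.not_dReach_tgt_src hst (hcrit e₂ he₂) h

end Digraph'

/-- Assume every vertex of `G` lies on a directed `(s,t)`-path.
A set `C` of edges of `G` is an `(s,t)`-min-cut iff every edge of `C` is critical and
`C`, regarded as a set of edges of the strip graph `D_λ`, is an antichain that is
maximal among the antichains of `D_λ` consisting of critical edges. -/
theorem stmt14 {V E : Type} [Fintype V] [DecidableEq V] [Fintype E] [DecidableEq E]
    (G : Digraph' V E) (s t : V) (hst : s ≠ t)
    (hpath : ∀ v : V, G.ReachAvoid ∅ s v ∧ G.ReachAvoid ∅ v t)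
    (lam : ℕ) (hmax : G.IsMaxFlowValue s t ∅ lam)
    (C : Finset E) :
    G.IsMinCut s t C ↔
      (∀ e ∈ C, G.Critical s t e) ∧ G.EdgeAntichain s t lam C ∧
      (∀ C' : Finset E, C ⊆ C' → (∀ e ∈ C', G.Critical s t e) →
        G.EdgeAntichain s t lam C' → C' = C) := by
  obtain ⟨f, hmf⟩ := hmax.exists_isMaxFlow
  constructor
  · intro hC
    obtain ⟨A, hA, rfl⟩ := hmf.exists_isMinCutPartition_of_isMinCut hst hC
    exact ⟨fun e he => ⟨_, hC, he⟩, hmf.edgeAntichain_edgesOut hst hA,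
      fun C' hsub hcrit hanti => hmf.eq_edgesOut_of_subset hst hA hsub hcrit hanti⟩
  · rintro ⟨hcrit, hanti, hmaximal⟩
    obtain rfl | hne := C.eq_empty_or_nonempty
    · obtain ⟨e, he⟩ := hmf.exists_critical hst (hpath t).1
      have := hmaximal {e} (empty_subset _) (by simpa using he) (by simp [Digraph'.EdgeAntichain])
      simp at this
    have hA := hmf.isMinCutPartition_notReachedFromHeads hst hne hcrit
    rw [← hmaximal _ (hmf.subset_edgesOut_notReachedFromHeads hst hcrit hanti)
      (fun e he => hA.critical hmf.isFlow hmf.flowValue_eq he) (hmf.edgeAntichain_edgesOut hst hA)]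
    exact hA.isMinCut_edgesOut hmf.isFlow hmf.flowValue_eq
end

section
/- For every set F of k edges of G, the maximum (s,t)-flow value of G − F equals the minimum, over all minimal (s,t)-cuts C of G with |C| ≤ λ + k, of the quantity |C| − |C ∩ F|. -/
open Finset

/-!
For a flow `f` vanishing on `F` and any cut `C`, the value of `f` is its net flow across the set of
vertices reachable from `s` in `G − C`; every edge leaving that set lies in `C`, and those of `F`
carry nothing, so `val f ≤ |C \ F|`. Conversely, if `f` is a maximum flow of `G − F`, there is no
augmenting path from `s` to `t` in the residual graph avoiding `F`; the edges `C₀` outside `F`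
leaving the residual reachable set are then saturated and no entering edge carries flow, so
`|C₀| = val f` and `F ∪ C₀` is a cut. A minimal cut `C ⊆ F ∪ C₀` attains `|C \ F| = val f`, and
`|C| ≤ val f + |F| ≤ λ + k` because deleting edges cannot increase the maximum flow.
-/

theorem Relation.ReflTransGen.exists_nodup_isChain_cons {α : Type*} {r : α → α → Prop} {a b : α}
    (h : Relation.ReflTransGen r a b) :
    ∃ l, (a :: l).IsChain r ∧ (a :: l).getLast (List.cons_ne_nil _ _) = b ∧ (a :: l).Nodup := by
  induction h using Relation.ReflTransGen.head_induction_on with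
  | refl => exact ⟨[], .singleton _, rfl, List.nodup_singleton _⟩
  | @head a c hac _ ih =>
    obtain ⟨l, hchain, hlast, hnodup⟩ := ih
    by_cases ha : a ∈ c :: l
    · obtain ⟨l₁, l₂, hsplit⟩ := List.append_of_mem ha
      have hsuffix : (a :: l₂) <:+ c :: l := hsplit ▸ List.suffix_append _ _
      refine ⟨l₂, hchain.suffix hsuffix, ?_, hnodup.sublist hsuffix.sublist⟩
      rw [← hlast]
      simp only [hsplit, List.getLast_append_of_ne_nil _ (List.cons_ne_nil _ _)]
    · exact ⟨c :: l, hchain.cons_cons hac, by rwa [List.getLast_cons_cons],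
        List.nodup_cons.2 ⟨ha, hnodup⟩⟩

namespace Digraph'

open Function

variable {V E : Type} {G : Digraph' V E} {s t : V}

section Cuts

theorem isCut_of_forall_mem (S : Finset V) (hs : s ∈ S) (ht : t ∉ S) {C : Finset E}
    (hC : ∀ e, G.src e ∈ S → G.tgt e ∉ S → e ∈ C) : G.IsCut s t C := by
  suffices ∀ v, G.ReachAvoid C s v → v ∈ S from fun h => ht (this t h)
  intro v hv
  induction hv with
  | refl => exact hs
  | tail _ hstep ih =>
    obtain ⟨e, heC, rfl, rfl⟩ := hstep
    by_contra h
    exact heC (hC e ih h)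

theorem isCut_univ [Fintype E] (G : Digraph' V E) (hst : s ≠ t) : G.IsCut s t univ := by
  intro h
  rcases Relation.ReflTransGen.cases_head h with rfl | ⟨_, ⟨e, he, -⟩, -⟩
  · exact hst rfl
  · exact he (mem_univ e)

theorem IsCut.exists_isMinimalCut_subset {C : Finset E} (hC : G.IsCut s t C) :
    ∃ C' ⊆ C, G.IsMinimalCut s t C' := by
  obtain ⟨C', ⟨hC'C, hC'⟩, hmin⟩ :=
    WellFounded.has_min wellFounded_lt {C' | C' ⊆ C ∧ G.IsCut s t C'} ⟨C, subset_rfl, hC⟩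
  exact ⟨C', hC'C, hC', fun C'' hlt hC'' => hmin C'' ⟨hlt.subset.trans hC'C, hC''⟩ hlt⟩

end Cuts

section NetFlow

variable [DecidableEq V]

def cross (G : Digraph' V E) (S : Finset V) (e : E) : ℤ :=
  (if G.src e ∈ S then 1 else 0) - (if G.tgt e ∈ S then 1 else 0)

theorem cross_le_one (S : Finset V) (e : E) : G.cross S e ≤ 1 := by
  unfold cross
  split_ifs <;> norm_num

theorem cross_nonpos {S : Finset V} {e : E} (h : G.src e ∈ S → G.tgt e ∈ S) :
    G.cross S e ≤ 0 := by
  unfold cross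
  split_ifs <;> simp_all

theorem cross_nonneg {S : Finset V} {e : E} (h : G.tgt e ∈ S → G.src e ∈ S) :
    0 ≤ G.cross S e := by
  unfold cross
  split_ifs <;> simp_all

theorem cross_eq_one {S : Finset V} {e : E} (hsrc : G.src e ∈ S) (htgt : G.tgt e ∉ S) :
    G.cross S e = 1 := by
  simp [cross, hsrc, htgt]

variable [Fintype E]

theorem flowValue_eq_sum_cross (f : E → ℕ) (v : V) :
    G.flowValue v f = ∑ e, (f e : ℤ) * G.cross {v} e := by
  simp [flowValue, cross, Finset.sum_filter, mul_sub, Finset.sum_sub_distrib]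

theorem sum_flowValue (f : E → ℕ) (S : Finset V) :
    ∑ v ∈ S, G.flowValue v f = ∑ e, (f e : ℤ) * G.cross S e := by
  simp only [flowValue_eq_sum_cross]
  rw [Finset.sum_comm]
  refine Finset.sum_congr rfl fun e _ => ?_
  simp [← Finset.mul_sum, cross, Finset.sum_sub_distrib, Finset.sum_ite_eq]

theorem conserves_iff {f : E → ℕ} :
    G.Conserves s t f ↔ ∀ v, v ≠ s → v ≠ t → G.flowValue v f = 0 := by
  simp only [Conserves, flowValue, sub_eq_zero, ← Nat.cast_sum, Nat.cast_inj]
  exact forall₃_congr fun _ _ _ => eq_comm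

theorem flowValue_eq_sum_cross_of_conserves {f : E → ℕ} (hf : G.Conserves s t f)
    {S : Finset V} (hs : s ∈ S) (ht : t ∉ S) :
    G.flowValue s f = ∑ e, (f e : ℤ) * G.cross S e := by
  rw [← sum_flowValue, Finset.sum_eq_single_of_mem s hs]
  exact fun v hv hvs => conserves_iff.1 hf v hvs (ne_of_mem_of_not_mem hv ht)

theorem flowValue_update_residual [DecidableEq E] {f g : E → ℕ} {e₀ : E} (hf : f e₀ ≤ 1)
    (hg : g e₀ = f e₀) (v : V) :
    G.flowValue v (update g e₀ (1 - f e₀)) = G.flowValue v g + (G.residual f).cross {v} e₀ := by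
  simp only [flowValue_eq_sum_cross]
  rw [← Finset.add_sum_erase _ _ (mem_univ e₀), ← Finset.add_sum_erase _ _ (mem_univ e₀),
    Finset.sum_congr rfl fun e he => by rw [update_of_ne (Finset.ne_of_mem_erase he)]]
  rcases Nat.le_one_iff_eq_zero_or_eq_one.1 hf with h | h <;>
    simp [cross, residual, h, hg] <;> ring

theorem IsFlow.flowValue_le_card_sdiff [Fintype V] [DecidableEq E] {f : E → ℕ} {F C : Finset E}
    (hf : G.IsFlow s t f) (hFf : ∀ e ∈ F, f e = 0) (hC : G.IsCut s t C) :
    G.flowValue s f ≤ #(C \ F) := by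
  classical
  set S := univ.filter (G.ReachAvoid C s)
  have hs : s ∈ S := mem_filter.2 ⟨mem_univ _, .refl⟩
  have ht : t ∉ S := fun h => hC (mem_filter.1 h).2
  have hcard : (#(C \ F) : ℤ) = ∑ e, if e ∈ C \ F then 1 else 0 := by
    rw [← natCast_card_filter, filter_mem_eq_inter, univ_inter]
  rw [flowValue_eq_sum_cross_of_conserves hf.2 hs ht, hcard]
  gcongr with e
  have hstep : e ∉ C → G.src e ∈ S → G.tgt e ∈ S := fun heC hsrc =>
    mem_filter.2 ⟨mem_univ _, (mem_filter.1 hsrc).2.tail ⟨e, heC, rfl, rfl⟩⟩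
  split_ifs with he
  · rcases Nat.le_one_iff_eq_zero_or_eq_one.1 (hf.1 e) with h | h <;> simp [h, cross_le_one]
  · by_cases heC : e ∈ C
    · simp [hFf e (by simpa [heC] using he)]
    · exact mul_nonpos_of_nonneg_of_nonpos (by positivity) (cross_nonpos (hstep heC))

/-- The third conjunct is the induction invariant: since the path is simple, the edge leaving its
first vertex is untouched by the augmentation along the rest of the path. -/
theorem exists_augment_of_isChain [DecidableEq E] {f : E → ℕ} {F : Finset E}
    (hcap : ∀ e, f e ≤ 1) (hFf : ∀ e ∈ F, f e = 0) :
    ∀ (l : List V) (v : V), (v :: l).IsChain ((G.residual f).stepAvoid F) →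
      (v :: l).getLast (List.cons_ne_nil _ _) = t → (v :: l).Nodup →
      ∃ f' : E → ℕ, (∀ e, f' e ≤ 1) ∧ (∀ e ∈ F, f' e = 0) ∧
        (∀ e, f' e ≠ f e → (G.residual f).src e ∈ v :: l) ∧
        ∀ w, G.flowValue w f' =
          G.flowValue w f + ((if v = w then 1 else 0) - (if t = w then 1 else 0)) := by
  intro l
  induction l with
  | nil =>
    rintro v - hlast -
    obtain rfl : v = t := hlast
    exact ⟨f, hcap, hFf, fun e he => absurd rfl he, fun w => by rw [sub_self, add_zero]⟩
  | cons c l ih =>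
    intro v hchain hlast hnodup
    obtain ⟨⟨e₀, he₀F, he₀s, he₀t⟩, hchain⟩ := List.isChain_cons_cons.1 hchain
    obtain ⟨f₁, hcap₁, hFf₁, hchanged, hval₁⟩ :=
      ih c hchain (by rwa [List.getLast_cons_cons] at hlast) hnodup.of_cons
    have hv : v ∉ c :: l := (List.nodup_cons.1 hnodup).1
    have hf₁e₀ : f₁ e₀ = f e₀ := by
      by_contra h
      exact hv (he₀s ▸ hchanged e₀ h)
    refine ⟨update f₁ e₀ (1 - f e₀), fun e => ?_, fun e he => ?_, fun e he => ?_, fun w => ?_⟩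
    · rcases eq_or_ne e e₀ with rfl | h
      · simp
      · simpa [h] using hcap₁ e
    · rw [update_of_ne (ne_of_mem_of_not_mem he he₀F)]
      exact hFf₁ e he
    · rcases eq_or_ne e e₀ with rfl | h
      · exact he₀s ▸ List.mem_cons_self
      · rw [update_of_ne h] at he
        exact List.mem_cons_of_mem _ (hchanged e he)
    · rw [flowValue_update_residual (hcap e₀) hf₁e₀, hval₁]
      simp only [cross, he₀s, he₀t, mem_singleton]
      ring

theorem IsFlow.exists_flowValue_add_one [DecidableEq E] {f : E → ℕ} {F : Finset E}
    (hf : G.IsFlow s t f) (hFf : ∀ e ∈ F, f e = 0) (hst : s ≠ t)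
    (hreach : (G.residual f).ReachAvoid F s t) :
    ∃ f', G.IsFlow s t f' ∧ (∀ e ∈ F, f' e = 0) ∧ G.flowValue s f' = G.flowValue s f + 1 := by
  obtain ⟨l, hchain, hlast, hnodup⟩ := hreach.exists_nodup_isChain_cons
  obtain ⟨f', hcap, hFf', -, hval⟩ := exists_augment_of_isChain hf.1 hFf l s hchain hlast hnodup
  refine ⟨f', ⟨hcap, conserves_iff.2 fun v hvs hvt => ?_⟩, hFf', by simp [hval, hst.symm]⟩
  simp [hval, conserves_iff.1 hf.2 v hvs hvt, Ne.symm hvs, Ne.symm hvt]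

theorem IsFlow.exists_cut_of_not_reach [Fintype V] [DecidableEq E] {f : E → ℕ} {F : Finset E}
    (hf : G.IsFlow s t f) (hFf : ∀ e ∈ F, f e = 0)
    (hreach : ¬ (G.residual f).ReachAvoid F s t) :
    ∃ C : Finset E, G.IsCut s t (F ∪ C) ∧ (#C : ℤ) ≤ G.flowValue s f := by
  classical
  set S := univ.filter ((G.residual f).ReachAvoid F s)
  have hs : s ∈ S := mem_filter.2 ⟨mem_univ _, .refl⟩
  have ht : t ∉ S := fun h => hreach (mem_filter.1 h).2
  have hfwd : ∀ e ∉ F, f e = 0 → G.src e ∈ S → G.tgt e ∈ S := fun e heF h hsrc =>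
    mem_filter.2 ⟨mem_univ _, (mem_filter.1 hsrc).2.tail
      ⟨e, heF, by simp [residual, h], by simp [residual, h]⟩⟩
  have hbwd : ∀ e ∉ F, f e = 1 → G.tgt e ∈ S → G.src e ∈ S := fun e heF h htgt =>
    mem_filter.2 ⟨mem_univ _, (mem_filter.1 htgt).2.tail
      ⟨e, heF, by simp [residual, h], by simp [residual, h]⟩⟩
  refine ⟨univ.filter fun e => e ∉ F ∧ G.src e ∈ S ∧ G.tgt e ∉ S,
    isCut_of_forall_mem S hs ht fun e hsrc htgt => ?_, ?_⟩
  · by_cases heF : e ∈ F <;> simp [heF, hsrc, htgt]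
  rw [flowValue_eq_sum_cross_of_conserves hf.2 hs ht, natCast_card_filter]
  gcongr with e
  split_ifs with he
  · obtain ⟨heF, hsrc, htgt⟩ := he
    have h : f e = 1 := by
      rcases Nat.le_one_iff_eq_zero_or_eq_one.1 (hf.1 e) with h | h
      · exact absurd (hfwd e heF h hsrc) htgt
      · exact h
    simp [h, cross_eq_one hsrc htgt]
  · rcases Nat.le_one_iff_eq_zero_or_eq_one.1 (hf.1 e) with h | h
    · simp [h]
    · have heF : e ∉ F := fun he => by simp [hFf e he] at h
      simpa [h] using cross_nonneg (hbwd e heF h)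

end NetFlow

section MaxFlow

variable [DecidableEq V] [Fintype E] {F : Finset E} {M : ℤ}

theorem IsMaxFlowValue.le_of_subset {F' : Finset E} {M' : ℤ} (hM : G.IsMaxFlowValue s t F M)
    (hM' : G.IsMaxFlowValue s t F' M') (h : F ⊆ F') : M' ≤ M := by
  obtain ⟨f, hf, hFf, rfl⟩ := hM'.1
  exact hM.2 f hf fun e he => hFf e (h he)

theorem IsMaxFlowValue.unique {M' : ℤ} (hM : G.IsMaxFlowValue s t F M)
    (hM' : G.IsMaxFlowValue s t F M') : M = M' :=
  le_antisymm (hM'.le_of_subset hM subset_rfl) (hM.le_of_subset hM' subset_rfl)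

variable [Fintype V] [DecidableEq E]

theorem exists_isMaxFlowValue (G : Digraph' V E) (hst : s ≠ t) (F : Finset E) :
    ∃ M, G.IsMaxFlowValue s t F M := by
  obtain ⟨M, ⟨f, hf, hFf, rfl⟩, hmax⟩ := Int.exists_greatest_of_bdd
    (P := fun m => ∃ f, G.IsFlow s t f ∧ (∀ e ∈ F, f e = 0) ∧ G.flowValue s f = m)
    ⟨#(univ \ F), fun _ ⟨f, hf, hFf, hval⟩ =>
      hval ▸ hf.flowValue_le_card_sdiff hFf (isCut_univ G hst)⟩
    ⟨0, fun _ => 0, ⟨fun _ => zero_le_one, fun _ _ _ => by simp⟩, fun _ _ => rfl,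
      by simp [flowValue]⟩
  exact ⟨_, ⟨f, hf, hFf, rfl⟩, fun f' hf' hFf' => hmax _ ⟨f', hf', hFf', rfl⟩⟩

theorem IsMaxFlowValue.exists_cut (hst : s ≠ t) (hM : G.IsMaxFlowValue s t F M) :
    ∃ C : Finset E, G.IsCut s t (F ∪ C) ∧ (#C : ℤ) ≤ M := by
  obtain ⟨⟨f, hf, hFf, rfl⟩, hmax⟩ := hM
  refine hf.exists_cut_of_not_reach hFf fun hreach => ?_
  obtain ⟨f', hf', hFf', hval⟩ := hf.exists_flowValue_add_one hFf hst hreach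
  linarith [hmax f' hf' hFf']

theorem IsMaxFlowValue.isLeast (hM : G.IsMaxFlowValue s t F M) (hst : s ≠ t) {lam k : ℕ}
    (hlam : G.IsMaxFlowValue s t ∅ lam) (hF : #F ≤ k) :
    IsLeast {m : ℤ | ∃ C : Finset E, G.IsMinimalCut s t C ∧ #C ≤ lam + k ∧
      m = (#C : ℤ) - #(C ∩ F)} M := by
  have hsplit (C : Finset E) : (#C : ℤ) - #(C ∩ F) = #(C \ F) := by
    rw [← card_sdiff_add_card_inter C F]
    push_cast
    ring
  have hle (C : Finset E) (hC : G.IsCut s t C) : M ≤ #(C \ F) := by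
    obtain ⟨f, hf, hFf, rfl⟩ := hM.1
    exact hf.flowValue_le_card_sdiff hFf hC
  refine ⟨?_, fun m ⟨C, hC, _, hm⟩ => hm ▸ hsplit C ▸ hle C hC.1⟩
  obtain ⟨C₀, hcut, hC₀⟩ := hM.exists_cut hst
  obtain ⟨C, hCsub, hC⟩ := hcut.exists_isMinimalCut_subset
  have hMlam : M ≤ lam := hlam.le_of_subset hM (empty_subset F)
  have hCF : #(C \ F) ≤ #C₀ := card_le_card (sdiff_le_iff.2 hCsub)
  have hCC₀ : #C ≤ #(F ∪ C₀) := card_le_card hCsub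
  have hunion := card_union_le F C₀
  refine ⟨C, hC, by omega, ?_⟩
  rw [hsplit]
  exact le_antisymm (hle C hC.1) (by omega)

end MaxFlow

end Digraph'

/-- For every set `F` of `k` edges of `G`, the maximum
`(s,t)`-flow value of `G − F` equals the minimum, over all minimal `(s,t)`-cuts `C`
of `G` with `|C| ≤ λ + k`, of `|C| − |C ∩ F|`. -/
theorem stmt16 {V E : Type} [Fintype V] [DecidableEq V] [Fintype E] [DecidableEq E]
    (G : Digraph' V E) (s t : V) (hst : s ≠ t)
    (lam k : ℕ) (hmax : G.IsMaxFlowValue s t ∅ lam)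
    (F : Finset E) (hF : F.card = k) (M : ℤ) :
    G.IsMaxFlowValue s t F M ↔
      IsLeast {m : ℤ | ∃ C : Finset E, G.IsMinimalCut s t C ∧ C.card ≤ lam + k ∧
        m = (C.card : ℤ) - ((C ∩ F).card : ℤ)} M := by
  obtain ⟨M₀, hM₀⟩ := G.exists_isMaxFlowValue hst F
  have hleast := hM₀.isLeast hst hmax hF.le
  refine ⟨fun hM => hM.unique hM₀ ▸ hleast, fun hM => hM.unique hleast ▸ hM₀⟩
end
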